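/- Let D, H₀ ∈ ℝ³ with D ≠ 0 and let γ > 0. For each α > 0, the strictly convex function δ ↦ α·‖H₀ + D × δ‖² + γ·‖δ‖² has a unique global minimizer δ_α ∈ ℝ³, and as α → ∞, δ_α converges to δ* = ‖D‖⁻² • (D × H⊥), where H⊥ = H₀ − ‖D‖⁻² • ⟨H₀, D⟩ • D. Consequently ‖H₀ + D × δ_α‖ → |⟨H₀, D⟩|/‖D‖ as α → ∞. -/

import Mathlib

/-! The cost is Tikhonov-regularised least squares for the linear map `δ ↦ D × δ`: if `δ₀` solves
the normal equation, the cost at `δ` exceeds the cost at `δ₀` by `α‖D × (δ - δ₀)‖² + γ‖δ - δ₀‖²`,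
so `δ₀` is the unique minimiser. Since `D × ·` is skew-adjoint and `(D × ·)²` acts as `-‖D‖²` on
`D⊥ ∋ D × H₀`, the normal equation is solved by `δ_α = α / (α‖D‖² + γ) • (D × H₀)`, which tends to
`‖D‖⁻² • (D × H₀) = δ*`. At `δ*` the residual `H₀ + D × δ*` is the projection of `H₀` onto `D`. -/

open RealInnerProductSpace Filter

/-- Cross product on `EuclideanSpace ℝ (Fin 3)`. -/
noncomputable def cross3 (a b : EuclideanSpace ℝ (Fin 3)) : EuclideanSpace ℝ (Fin 3) :=
  (WithLp.equiv 2 (Fin 3 → ℝ)).symm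
    ![a 1 * b 2 - a 2 * b 1, a 2 * b 0 - a 0 * b 2, a 0 * b 1 - a 1 * b 0]

open Matrix WithLp Topology

section Tikhonov

variable {E F : Type*} [NormedAddCommGroup E] [InnerProductSpace ℝ E]
  [NormedAddCommGroup F] [InnerProductSpace ℝ F]

def tikhonovCost (L : E →ₗ[ℝ] F) (h : F) (α γ : ℝ) (x : E) : ℝ :=
  α * ‖h + L x‖ ^ 2 + γ * ‖x‖ ^ 2

variable {L : E →ₗ[ℝ] F} {h : F} {α γ : ℝ} {x₀ : E}

theorem tikhonovCost_eq_add_of_normal_eq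
    (hx₀ : ∀ v, α * ⟪h + L x₀, L v⟫ + γ * ⟪x₀, v⟫ = 0) (x : E) :
    tikhonovCost L h α γ x =
      tikhonovCost L h α γ x₀ + (α * ‖L (x - x₀)‖ ^ 2 + γ * ‖x - x₀‖ ^ 2) := by
  obtain ⟨v, rfl⟩ : ∃ v, x = x₀ + v := ⟨x - x₀, by abel⟩
  unfold tikhonovCost
  rw [add_sub_cancel_left, map_add, ← add_assoc, norm_add_sq_real (h + L x₀), norm_add_sq_real x₀]
  linear_combination 2 * hx₀ v

theorem tikhonovCost_le_of_normal_eq (hα : 0 ≤ α) (hγ : 0 ≤ γ)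
    (hx₀ : ∀ v, α * ⟪h + L x₀, L v⟫ + γ * ⟪x₀, v⟫ = 0) (x : E) :
    tikhonovCost L h α γ x₀ ≤ tikhonovCost L h α γ x := by
  rw [tikhonovCost_eq_add_of_normal_eq hx₀ x]
  have : 0 ≤ α * ‖L (x - x₀)‖ ^ 2 + γ * ‖x - x₀‖ ^ 2 := by positivity
  linarith

theorem eq_of_tikhonovCost_le_of_normal_eq (hα : 0 ≤ α) (hγ : 0 < γ)
    (hx₀ : ∀ v, α * ⟪h + L x₀, L v⟫ + γ * ⟪x₀, v⟫ = 0) {x : E}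
    (hx : tikhonovCost L h α γ x ≤ tikhonovCost L h α γ x₀) : x = x₀ := by
  rw [tikhonovCost_eq_add_of_normal_eq hx₀ x] at hx
  have hLx : 0 ≤ α * ‖L (x - x₀)‖ ^ 2 := by positivity
  have hnorm : ‖x - x₀‖ ^ 2 ≤ 0 := by nlinarith
  rw [sq_nonpos_iff, norm_eq_zero, sub_eq_zero] at hnorm
  exact hnorm

end Tikhonov

theorem tendsto_div_mul_add_atTop {k : ℝ} (hk : k ≠ 0) (γ : ℝ) :
    Tendsto (fun α : ℝ => α / (α * k + γ)) atTop (𝓝 k⁻¹) := by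
  have hquot : Tendsto (fun α : ℝ => (α * k + γ) / α) atTop (𝓝 k) := by
    have : Tendsto (fun α : ℝ => k + γ / α) atTop (𝓝 (k + 0)) :=
      tendsto_const_nhds.add (tendsto_const_nhds.div_atTop tendsto_id)
    rw [add_zero] at this
    refine this.congr' ?_
    filter_upwards [eventually_ne_atTop 0] with α hα
    field_simp
  simpa only [inv_div] using hquot.inv₀ hk

theorem real_inner_eq_dotProduct {ι : Type*} [Fintype ι] (x y : EuclideanSpace ℝ ι) :
    ⟪x, y⟫ = ofLp x ⬝ᵥ ofLp y := by
  rw [EuclideanSpace.inner_eq_star_dotProduct, star_trivial, dotProduct_comm]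

theorem cross3_eq_crossProduct (a b : EuclideanSpace ℝ (Fin 3)) :
    cross3 a b = toLp 2 (ofLp a ⨯₃ ofLp b) := rfl

noncomputable def cross3ₗ (a : EuclideanSpace ℝ (Fin 3)) :
    EuclideanSpace ℝ (Fin 3) →ₗ[ℝ] EuclideanSpace ℝ (Fin 3) :=
  (WithLp.linearEquiv 2 ℝ (Fin 3 → ℝ)).symm.toLinearMap ∘ₗ crossProduct (ofLp a) ∘ₗ
    (WithLp.linearEquiv 2 ℝ (Fin 3 → ℝ)).toLinearMap

theorem cross3ₗ_apply (a b : EuclideanSpace ℝ (Fin 3)) : cross3ₗ a b = cross3 a b := rfl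

theorem continuous_cross3 (a : EuclideanSpace ℝ (Fin 3)) : Continuous (cross3 a) :=
  (cross3ₗ a).continuous_of_finiteDimensional

theorem cross3_self (a : EuclideanSpace ℝ (Fin 3)) : cross3 a a = 0 := by
  rw [cross3_eq_crossProduct, cross_self, toLp_zero]

theorem inner_self_cross3 (a b : EuclideanSpace ℝ (Fin 3)) : ⟪a, cross3 a b⟫ = 0 := by
  rw [real_inner_eq_dotProduct, cross3_eq_crossProduct, ofLp_toLp, dot_self_cross]

theorem inner_cross3_right (a x y : EuclideanSpace ℝ (Fin 3)) :
    ⟪x, cross3 a y⟫ = -⟪cross3 a x, y⟫ := by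
  simp only [real_inner_eq_dotProduct, cross3_eq_crossProduct]
  rw [triple_product_permutation, triple_product_permutation, ← cross_anticomm,
    dotProduct_neg, dotProduct_comm]

theorem inner_cross3_cross3 (a b c : EuclideanSpace ℝ (Fin 3)) :
    ⟪cross3 a b, cross3 a c⟫ = ‖a‖ ^ 2 * ⟪b, c⟫ - ⟪a, b⟫ * ⟪a, c⟫ := by
  simp only [← real_inner_self_eq_norm_sq, real_inner_eq_dotProduct, cross3_eq_crossProduct,
    cross_dot_cross]
  rw [dotProduct_comm (ofLp b) (ofLp a)]
  ring

theorem cross3_cross3 (a b : EuclideanSpace ℝ (Fin 3)) :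
    cross3 a (cross3 a b) = ⟪a, b⟫ • a - ‖a‖ ^ 2 • b := by
  simp only [← real_inner_self_eq_norm_sq, real_inner_eq_dotProduct, cross3_eq_crossProduct,
    cross_cross_eq_smul_sub_smul']
  rfl

theorem cross3_normal_eq (D H : EuclideanSpace ℝ (Fin 3)) {α γ c : ℝ}
    (hc : c * (α * ‖D‖ ^ 2 + γ) = α) (v : EuclideanSpace ℝ (Fin 3)) :
    α * ⟪H + cross3ₗ D (c • cross3 D H), cross3ₗ D v⟫ + γ * ⟪c • cross3 D H, v⟫ = 0 := by
  rw [map_smul, cross3ₗ_apply, cross3ₗ_apply, inner_add_left, real_inner_smul_left,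
    real_inner_smul_left, inner_cross3_right, inner_cross3_cross3, inner_self_cross3]
  linear_combination ⟪cross3 D H, v⟫ * hc

theorem cross3_sub_smul_self (D H : EuclideanSpace ℝ (Fin 3)) (t : ℝ) :
    cross3 D (H - t • D) = cross3 D H := by
  rw [← cross3ₗ_apply, map_sub, map_smul, cross3ₗ_apply, cross3ₗ_apply, cross3_self, smul_zero,
    sub_zero]

theorem add_inv_smul_cross3_cross3 {D : EuclideanSpace ℝ (Fin 3)} (hD : D ≠ 0)
    (H : EuclideanSpace ℝ (Fin 3)) :
    H + cross3 D ((‖D‖ ^ 2)⁻¹ • cross3 D H) = (⟪H, D⟫ / ‖D‖ ^ 2) • D := by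
  have hk : ‖D‖ ^ 2 ≠ 0 := by positivity
  rw [← cross3ₗ_apply, map_smul, cross3ₗ_apply, cross3_cross3, smul_sub, smul_smul,
    smul_smul, inv_mul_cancel₀ hk, one_smul, real_inner_comm, div_eq_inv_mul]
  abel

theorem stmt15 (D H₀ : EuclideanSpace ℝ (Fin 3)) (hD : D ≠ 0) (γ : ℝ) (hγ : 0 < γ)
    (Hperp δstar : EuclideanSpace ℝ (Fin 3))
    (hHperp : Hperp = H₀ - (‖D‖ ^ 2)⁻¹ • ⟪H₀, D⟫ • D)
    (hδstar : δstar = (‖D‖ ^ 2)⁻¹ • cross3 D Hperp) :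
    ∃ δmin : ℝ → EuclideanSpace ℝ (Fin 3),
      (∀ α : ℝ, 0 < α →
        (∀ δ : EuclideanSpace ℝ (Fin 3),
            α * ‖H₀ + cross3 D (δmin α)‖ ^ 2 + γ * ‖δmin α‖ ^ 2
              ≤ α * ‖H₀ + cross3 D δ‖ ^ 2 + γ * ‖δ‖ ^ 2) ∧
        ∀ δ' : EuclideanSpace ℝ (Fin 3),
          (∀ δ : EuclideanSpace ℝ (Fin 3),
              α * ‖H₀ + cross3 D δ'‖ ^ 2 + γ * ‖δ'‖ ^ 2
                ≤ α * ‖H₀ + cross3 D δ‖ ^ 2 + γ * ‖δ‖ ^ 2) → δ' = δmin α) ∧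
      Tendsto δmin atTop (nhds δstar) ∧
      Tendsto (fun α : ℝ => ‖H₀ + cross3 D (δmin α)‖) atTop (nhds (|⟪H₀, D⟫| / ‖D‖)) := by
  have hDpos : 0 < ‖D‖ := norm_pos_iff.mpr hD
  have hδstar' : δstar = (‖D‖ ^ 2)⁻¹ • cross3 D H₀ := by
    rw [hδstar, hHperp, smul_smul, cross3_sub_smul_self]
  have hlim : Tendsto (fun α : ℝ => (α / (α * ‖D‖ ^ 2 + γ)) • cross3 D H₀) atTop (𝓝 δstar) :=
    hδstar' ▸ (tendsto_div_mul_add_atTop (by positivity) γ).smul_const _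
  refine ⟨fun α => (α / (α * ‖D‖ ^ 2 + γ)) • cross3 D H₀, fun α hα => ?_, hlim, ?_⟩
  · set δα := (α / (α * ‖D‖ ^ 2 + γ)) • cross3 D H₀
    have hnormal := cross3_normal_eq D H₀ (div_mul_cancel₀ α (by positivity))
    exact ⟨fun δ => tikhonovCost_le_of_normal_eq hα.le hγ.le hnormal δ,
      fun δ' hδ' => eq_of_tikhonovCost_le_of_normal_eq hα.le hγ hnormal (hδ' δα)⟩
  · have hfloor : ‖H₀ + cross3 D δstar‖ = |⟪H₀, D⟫| / ‖D‖ := by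
      rw [hδstar', add_inv_smul_cross3_cross3 hD, norm_smul, Real.norm_eq_abs, abs_div,
        abs_of_pos (by positivity : (0:ℝ) < ‖D‖ ^ 2)]
      field_simp
    exact hfloor ▸ ((continuous_const.add (continuous_cross3 D)).norm.tendsto δstar).comp hlim
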